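/- Let (G, g, h) be a quasi-twilled Lie algebra over a field K and let B : h → g be a deformation map of type II. Then the bracket on h defined by μ^B(u, v) := P_h([B(u) + u, B(v) + v]) is a Lie algebra structure on h, and the map σ : h → End(g) defined by σ(v)(x) := P_g([B(v) + v, x]) − B(P_h([B(v) + v, x])) is a representation of the Lie algebra (h, μ^B) on the vector space g, i.e., σ(μ^B(u,v)) = σ(u) ∘ σ(v) − σ(v) ∘ σ(u) for all u, v ∈ h. -/

import Mathlib

/-!
Write `Φ u = B u + u` for the graph map `h → G` of `B` and `θ = P_g - B ∘ P_h : G → g`,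
so that `μ^B(u, v) = P_h⁅Φ u, Φ v⁆` and `σ(v)(x) = θ⁅Φ v, x⁆`. Since `P_g + P_h = id`, the
deformation equation says exactly that `θ` kills `⁅Φ u, Φ v⁆`, i.e. `Φ (μ^B(u, v)) = ⁅Φ u, Φ v⁆`.
Thus `Φ` is a bracket-preserving map into `G`, and the Jacobi identity for `μ^B` is
the one of `G` pushed through `P_h`. For `σ`, note `θ X = X - Φ (P_h X)` and `θ` kills
`⁅Φ u, Φ w⁆`, so `θ⁅Φ u, θ X⁆ = θ⁅Φ u, X⁆`; the representation property is then the Jacobi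
identity `⁅⁅Φ u, Φ v⁆, x⁆ = ⁅Φ u, ⁅Φ v, x⁆⁆ - ⁅Φ v, ⁅Φ u, x⁆⁆` with `θ` applied.
-/

/-- A bracket `b` on a `K`-vector space `V` is a Lie algebra structure if it is
bilinear, alternating, and satisfies the Jacobi identity. -/
def IsLieBracketOn (K V : Type*) [Field K] [AddCommGroup V] [Module K V]
    (b : V → V → V) : Prop :=
  (∀ x y z : V, b (x + y) z = b x z + b y z) ∧
  (∀ (c : K) (x y : V), b (c • x) y = c • b x y) ∧
  (∀ x y z : V, b x (y + z) = b x y + b x z) ∧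
  (∀ (c : K) (x y : V), b x (c • y) = c • b x y) ∧
  (∀ x : V, b x x = 0) ∧
  (∀ x y z : V, b x (b y z) + b y (b z x) + b z (b x y) = 0)

variable {K G : Type*} [Field K] [LieRing G] [LieAlgebra K G]
  {g h : Submodule K G}

/-- The bracket `μ^B(u, v) = P_h⁅Bu + u, Bv + v⁆` on `h`. -/
def muB (Ph : G →ₗ[K] h) (B : h →ₗ[K] g) (u v : h) : h :=
  Ph ⁅(B u : G) + (u : G), (B v : G) + (v : G)⁆

/-- The map `σ(v)(x) = P_g⁅Bv + v, x⁆ − B(P_h⁅Bv + v, x⁆)`. -/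
def sigmaB (Pg : G →ₗ[K] g) (Ph : G →ₗ[K] h) (B : h →ₗ[K] g) (v : h) (x : g) : g :=
  Pg ⁅(B v : G) + (v : G), (x : G)⁆ - B (Ph ⁅(B v : G) + (v : G), (x : G)⁆)

theorem LinearMap.isLieBracketOn {V : Type*} [AddCommGroup V] [Module K V]
    (β : V →ₗ[K] V →ₗ[K] V) (hself : ∀ x, β x x = 0)
    (hjacobi : ∀ x y z, β x (β y z) + β y (β z x) + β z (β x y) = 0) :
    IsLieBracketOn K V fun x y => β x y :=
  ⟨fun x y z => by simp only [map_add, LinearMap.add_apply],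
    fun c x y => by simp only [map_smul, LinearMap.smul_apply],
    fun x y z => map_add _ _ _, fun c x y => map_smul _ _ _, hself, hjacobi⟩

namespace QuasiTwilled

variable (Pg : G →ₗ[K] g) (Ph : G →ₗ[K] h) (B : h →ₗ[K] g)

def graphMap : h →ₗ[K] G :=
  g.subtype ∘ₗ B + h.subtype

@[simp]
theorem graphMap_apply (u : h) : graphMap B u = (B u : G) + (u : G) := rfl

def projAlongGraph : G →ₗ[K] g :=
  Pg - B ∘ₗ Ph

def IsDeformationMapII : Prop :=
  ∀ u v : h, Pg ⁅graphMap B u, graphMap B v⁆ = B (Ph ⁅graphMap B u, graphMap B v⁆)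

theorem muB_eq (u v : h) : muB Ph B u v = Ph ⁅graphMap B u, graphMap B v⁆ := rfl

theorem sigmaB_eq (v : h) (x : g) :
    sigmaB Pg Ph B v x = projAlongGraph Pg Ph B ⁅graphMap B v, (x : G)⁆ := rfl

variable {Pg Ph B}

theorem coe_projAlongGraph (hP : ∀ X : G, (Pg X : G) + (Ph X : G) = X) (X : G) :
    (projAlongGraph Pg Ph B X : G) = X - graphMap B (Ph X) := by
  have hPg : (Pg X : G) = X - Ph X := eq_sub_of_add_eq (hP X)
  simp only [projAlongGraph, LinearMap.sub_apply, LinearMap.comp_apply, Submodule.coe_sub, hPg,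
    graphMap_apply]
  abel

theorem projAlongGraph_lie_graphMap (hB : IsDeformationMapII Pg Ph B) (u w : h) :
    projAlongGraph Pg Ph B ⁅graphMap B u, graphMap B w⁆ = 0 :=
  sub_eq_zero.mpr (hB u w)

theorem graphMap_muB (hP : ∀ X : G, (Pg X : G) + (Ph X : G) = X)
    (hB : IsDeformationMapII Pg Ph B) (u v : h) :
    graphMap B (muB Ph B u v) = ⁅graphMap B u, graphMap B v⁆ := by
  have h0 := coe_projAlongGraph (B := B) hP ⁅graphMap B u, graphMap B v⁆
  rw [projAlongGraph_lie_graphMap hB, Submodule.coe_zero, eq_comm, sub_eq_zero] at h0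
  exact h0.symm

theorem projAlongGraph_lie_projAlongGraph (hP : ∀ X : G, (Pg X : G) + (Ph X : G) = X)
    (hB : IsDeformationMapII Pg Ph B) (u : h) (X : G) :
    projAlongGraph Pg Ph B ⁅graphMap B u, (projAlongGraph Pg Ph B X : G)⁆ =
      projAlongGraph Pg Ph B ⁅graphMap B u, X⁆ := by
  rw [coe_projAlongGraph hP, lie_sub, map_sub, projAlongGraph_lie_graphMap hB, sub_zero]

theorem isLieBracketOn_muB (hP : ∀ X : G, (Pg X : G) + (Ph X : G) = X)
    (hB : IsDeformationMapII Pg Ph B) : IsLieBracketOn K h (muB Ph B) := by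
  have hlie : ∀ u v w : h,
      muB Ph B u (muB Ph B v w) = Ph ⁅graphMap B u, ⁅graphMap B v, graphMap B w⁆⁆ := by
    intro u v w
    rw [muB_eq, graphMap_muB hP hB]
  refine LinearMap.isLieBracketOn
    (((LieModule.toEnd K G G : G →ₗ[K] Module.End K G).compl₁₂ (graphMap B) (graphMap B)).compr₂
      Ph) (fun u => ?_) (fun u v w => ?_)
  · change Ph ⁅graphMap B u, graphMap B u⁆ = 0
    rw [lie_self, map_zero]
  · change muB Ph B u (muB Ph B v w) + muB Ph B v (muB Ph B w u) + muB Ph B w (muB Ph B u v) = 0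
    rw [hlie, hlie, hlie, ← map_add, ← map_add, lie_jacobi, map_zero]

theorem sigmaB_muB (hP : ∀ X : G, (Pg X : G) + (Ph X : G) = X)
    (hB : IsDeformationMapII Pg Ph B) (u v : h) (x : g) :
    sigmaB Pg Ph B (muB Ph B u v) x =
      sigmaB Pg Ph B u (sigmaB Pg Ph B v x) - sigmaB Pg Ph B v (sigmaB Pg Ph B u x) := by
  simp only [sigmaB_eq, projAlongGraph_lie_projAlongGraph hP hB, graphMap_muB hP hB, lie_lie,
    map_sub]

end QuasiTwilled

theorem stmt15_general (K G : Type*) [Field K] [LieRing G] [LieAlgebra K G]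
    (g h : Submodule K G)
    (Pg : G →ₗ[K] g) (Ph : G →ₗ[K] h)
    (hP : ∀ X : G, (Pg X : G) + (Ph X : G) = X)
    (B : h →ₗ[K] g)
    (hB : ∀ u v : h, Pg ⁅(B u : G) + (u : G), (B v : G) + (v : G)⁆ =
        B (Ph ⁅(B u : G) + (u : G), (B v : G) + (v : G)⁆)) :
    IsLieBracketOn K h (muB Ph B) ∧
    (∀ (u v : h) (x : g),
      sigmaB Pg Ph B (muB Ph B u v) x =
        sigmaB Pg Ph B u (sigmaB Pg Ph B v x) - sigmaB Pg Ph B v (sigmaB Pg Ph B u x)) :=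
  ⟨QuasiTwilled.isLieBracketOn_muB hP hB, QuasiTwilled.sigmaB_muB hP hB⟩

/-- Let `(G, g, h)` be a quasi-twilled Lie algebra with projections
`Pg`, `Ph`, and let `B : h → g` be a deformation map of type II. Then
`μ^B(u, v) = P_h⁅Bu + u, Bv + v⁆` is a Lie algebra structure on `h`, and
`σ(v)(x) = P_g⁅Bv + v, x⁆ − B(P_h⁅Bv + v, x⁆)` is a representation of
`(h, μ^B)` on the vector space `g`. -/
theorem stmt15 (K G : Type*) [Field K] [LieRing G] [LieAlgebra K G]
    (g h : Submodule K G) (hcompl : IsCompl g h)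
    (hsub : ∀ u ∈ h, ∀ v ∈ h, ⁅u, v⁆ ∈ h)
    (Pg : G →ₗ[K] g) (Ph : G →ₗ[K] h)
    (hP : ∀ X : G, (Pg X : G) + (Ph X : G) = X)
    (B : h →ₗ[K] g)
    (hB : ∀ u v : h, Pg ⁅(B u : G) + (u : G), (B v : G) + (v : G)⁆ =
        B (Ph ⁅(B u : G) + (u : G), (B v : G) + (v : G)⁆)) :
    IsLieBracketOn K h (muB Ph B) ∧
    (∀ (u v : h) (x : g),
      sigmaB Pg Ph B (muB Ph B u v) x =
        sigmaB Pg Ph B u (sigmaB Pg Ph B v x) - sigmaB Pg Ph B v (sigmaB Pg Ph B u x)) :=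
  stmt15_general K G g h Pg Ph hP B hB
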